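/- arXiv:1701.02831 — 2 statements merged into one kernel-verified Lean document; each statement's English description precedes it below -/
import Mathlib

section
/- Modulation ambiguity of blind FROG (Proposition 1, part 4): Let N be a positive integer, L and k₀ integers, and x₁, x₂ : ℤ/Nℤ → ℂ. Define y_m[n] = x₁[n]·x₂[n+mL]. The modulated signals x₁^{k₀}[n] = x₁[n] e^{−2πi k₀ n/N} and x₂^{k₀}[n] = x₂[n] e^{2πi k₀ n/N} satisfy x₁^{k₀}[n]·x₂^{k₀}[n+mL] = y_m[n]·e^{2πi m L k₀/N} for all n, m, and consequently the blind FROG trace of (x₁^{k₀}, x₂^{k₀}) equals that of (x₁, x₂): for every k and m, |∑_{n=0}^{N−1} x₁^{k₀}[n] x₂^{k₀}[n+mL] e^{−2πi k n/N}|² = |∑_{n=0}^{N−1} y_m[n] e^{−2πi k n/N}|². -/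
/-
Modulating `x₁` by the character `n ↦ e^{-2πi k₀ n/N}` and `x₂` by its inverse multiplies each
product `x₁[n] x₂[n + mL]` by `ψ(-n) ψ(n + mL) = ψ(mL)`, a phase independent of `n`.
Hence every `y_m` is multiplied by a unimodular constant, which scales its DFT without changing
its modulus. Writing the exponentials as values of the additive character `ZMod.stdAddChar`
makes the reduction of `(n + mL).val` modulo `N` automatic.
-/

open Complex Finset

/-- Discrete Fourier transform of a signal `x : ZMod N → ℂ`:
`x̂[k] = ∑_{n=0}^{N-1} x[n] e^{-2πi k n / N}`. -/
noncomputable def dft {N : ℕ} [NeZero N] (x : ZMod N → ℂ) (k : ZMod N) : ℂ :=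
  ∑ n : ZMod N, x n * Complex.exp (-(2 * (Real.pi : ℂ) * Complex.I * (k.val : ℂ) * (n.val : ℂ)) / (N : ℂ))

theorem AddChar.mul_neg_apply_mul_add_apply {G M : Type*} [AddGroup G] [CommMonoid M]
    (ψ : AddChar G M) (x₁ x₂ : G → M) (n c : G) :
    x₁ n * ψ (-n) * (x₂ (n + c) * ψ (n + c)) = x₁ n * x₂ (n + c) * ψ c := by
  rw [mul_mul_mul_comm, ← AddChar.map_add_eq_mul, neg_add_cancel_left]

namespace ZMod

variable {N : ℕ} [NeZero N]

theorem stdAddChar_intCast_mul (k : ℤ) (n : ZMod N) :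
    stdAddChar ((k : ZMod N) * n) = exp (2 * Real.pi * I * k * n.val / N) := by
  have hcast : (k : ZMod N) * n = ((k * n.val : ℤ) : ZMod N) := by
    push_cast
    rw [natCast_zmod_val]
  rw [hcast, stdAddChar_coe]
  push_cast
  ring_nf

theorem norm_stdAddChar (j : ZMod N) : ‖stdAddChar j‖ = 1 :=
  Circle.norm_coe _

end ZMod

theorem dft_mul_const {N : ℕ} [NeZero N] (x : ZMod N → ℂ) (c : ℂ) (k : ZMod N) :
    dft (fun n => x n * c) k = dft x k * c := by
  simp only [dft, sum_mul]
  exact sum_congr rfl fun n _ => by ring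

theorem norm_dft_mul_of_norm_eq_one {N : ℕ} [NeZero N] (x : ZMod N → ℂ) {c : ℂ} (hc : ‖c‖ = 1)
    (k : ZMod N) : ‖dft (fun n => x n * c) k‖ = ‖dft x k‖ := by
  rw [dft_mul_const, norm_mul, hc, mul_one]

/-- Modulation ambiguity of blind FROG (Proposition 1, part 4). -/
theorem blind_frog_modulation_ambiguity
    (N : ℕ) [NeZero N] (L k₀ : ℤ) (x₁ x₂ : ZMod N → ℂ)
    (x₁k₀ x₂k₀ : ZMod N → ℂ) (ym : ℤ → ZMod N → ℂ)
    (hy : ∀ (m : ℤ) (n : ZMod N), ym m n = x₁ n * x₂ (n + ((m * L : ℤ) : ZMod N)))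
    (hx₁ : ∀ n : ZMod N,
      x₁k₀ n = x₁ n * Complex.exp (-(2 * (Real.pi : ℂ) * Complex.I * (k₀ : ℂ) * (n.val : ℂ)) / (N : ℂ)))
    (hx₂ : ∀ n : ZMod N,
      x₂k₀ n = x₂ n * Complex.exp ((2 * (Real.pi : ℂ) * Complex.I * (k₀ : ℂ) * (n.val : ℂ)) / (N : ℂ))) :
    (∀ (m : ℤ) (n : ZMod N),
        x₁k₀ n * x₂k₀ (n + ((m * L : ℤ) : ZMod N)) =
          ym m n * Complex.exp ((2 * (Real.pi : ℂ) * Complex.I * ((m : ℂ) * (L : ℂ) * (k₀ : ℂ))) / (N : ℂ))) ∧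
    (∀ (k : ZMod N) (m : ℤ),
        ‖dft (fun n => x₁k₀ n * x₂k₀ (n + ((m * L : ℤ) : ZMod N))) k‖ ^ 2 =
          ‖dft (ym m) k‖ ^ 2) := by
  set ψ := ZMod.stdAddChar.mulShift (k₀ : ZMod N)
  have hψ₁ : ∀ n, x₁k₀ n = x₁ n * ψ (-n) := fun n => by
    have hneg : (k₀ : ZMod N) * -n = ((-k₀ : ℤ) : ZMod N) * n := by push_cast; ring
    rw [hx₁, AddChar.mulShift_apply, hneg, ZMod.stdAddChar_intCast_mul]
    push_cast
    ring_nf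
  have hψ₂ : ∀ n, x₂k₀ n = x₂ n * ψ n := fun n => by
    rw [hx₂, AddChar.mulShift_apply, ZMod.stdAddChar_intCast_mul]
  have hphase : ∀ m : ℤ, ψ ((m * L : ℤ) : ZMod N) =
      exp (2 * Real.pi * I * ((m : ℂ) * (L : ℂ) * (k₀ : ℂ)) / N) := fun m => by
    rw [AddChar.mulShift_apply, ← Int.cast_mul, ZMod.stdAddChar_coe]
    push_cast
    ring_nf
  have hshift : ∀ (m : ℤ) (n : ZMod N), x₁k₀ n * x₂k₀ (n + ((m * L : ℤ) : ZMod N)) =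
      ym m n * exp (2 * Real.pi * I * ((m : ℂ) * (L : ℂ) * (k₀ : ℂ)) / N) := fun m n => by
    rw [hψ₁, hψ₂, AddChar.mul_neg_apply_mul_add_apply, hy, hphase]
  refine ⟨hshift, fun k m => ?_⟩
  simp only [hshift]
  rw [norm_dft_mul_of_norm_eq_one _ (by rw [← hphase]; exact ZMod.norm_stdAddChar _)]
end

section
/- Null space of the blind FROG phase system (step in the proof of Theorem 1): Let d₁, d₂, d₃ : ℤ → ℝ. Then d₁(k−ℓ) + d₂(ℓ) + d₃(k) = 0 holds for all k, ℓ ∈ ℤ if and only if there exists a ∈ ℝ such that for all k ∈ ℤ: d₁(k) = a·k − d₂(0) − d₃(0), d₂(k) = a·k + d₂(0), and d₃(k) = −a·k + d₃(0). In other words, the only solutions of the homogeneous system are affine functions of the stated form. -/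
/-- Null space of the blind FROG phase system: `d₁(k−ℓ) + d₂(ℓ) + d₃(k) = 0` for all
integers `k, ℓ` iff the three functions are affine of the stated form. -/
theorem blind_frog_phase_null_space (d₁ d₂ d₃ : ℤ → ℝ) :
    (∀ k ℓ : ℤ, d₁ (k - ℓ) + d₂ ℓ + d₃ k = 0) ↔
      ∃ a : ℝ, ∀ k : ℤ,
        d₁ k = a * (k : ℝ) - d₂ 0 - d₃ 0 ∧
        d₂ k = a * (k : ℝ) + d₂ 0 ∧
        d₃ k = -(a * (k : ℝ)) + d₃ 0 := by
  constructor
  · intro h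
    have hd3 : ∀ k : ℤ, d₃ k = -d₁ k - d₂ 0 := by
      intro k
      have := h k 0
      simp only [sub_zero] at this
      linarith
    have hd2 : ∀ k : ℤ, d₂ k = d₁ k - d₁ 0 + d₂ 0 := by
      intro k
      have := h k k
      simp only [sub_self] at this
      rw [hd3 k] at this
      linarith
    have hsub : ∀ k ℓ : ℤ, d₁ (k - ℓ) - d₁ 0 = (d₁ k - d₁ 0) - (d₁ ℓ - d₁ 0) := by
      intro k ℓ
      have := h k ℓ
      rw [hd2 ℓ, hd3 k] at this
      linarith
    set g : ℤ → ℝ := fun k => d₁ k - d₁ 0 with hg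
    have hadd : ∀ k ℓ : ℤ, g (k + ℓ) = g k + g ℓ := by
      intro k ℓ
      have h1 := hsub k (-ℓ)
      have h2 := hsub 0 ℓ
      simp only [hg, sub_self, zero_sub, sub_neg_eq_add] at h1 h2 ⊢
      linarith
    have hlin : ∀ k : ℤ, g k = (k : ℝ) * g 1 := by
      intro k
      have := map_zsmul (AddMonoidHom.mk' g hadd) k (1 : ℤ)
      simpa [zsmul_eq_mul] using this
    refine ⟨d₁ 1 - d₁ 0, fun k => ?_⟩
    have hd10 : d₁ 0 = -d₂ 0 - d₃ 0 := by have := h 0 0; simp at this; linarith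
    have hk := hlin k
    simp only [hg] at hk
    refine ⟨by linarith, by rw [hd2 k]; linarith, by rw [hd3 k]; linarith⟩
  · rintro ⟨a, ha⟩ k ℓ
    obtain ⟨h1, -, -⟩ := ha (k - ℓ)
    obtain ⟨-, h2, -⟩ := ha ℓ
    obtain ⟨-, -, h3⟩ := ha k
    rw [h1, h2, h3]
    push_cast
    ring
end
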